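/- Let c, E ∈ ℝ with c > 1 and E > 2 (superluminal rotational case). Define Ω²(ζ) = (1/64)·(−8(c²−1)(E−1) − (c−1)²/ζ² − 16(c+1)²ζ²) for ζ ∈ ℂ, ζ ≠ 0. Then the set {ζ ∈ ℂ : ζ ≠ 0 and Ω²(ζ) = 0} consists of exactly the four purely imaginary numbers ± i·(sqrt(c²−1)/(2·sqrt(2)·(c+1)))·(sqrt(E) + sqrt(E−2)) and ± i·(sqrt(c²−1)/(2·sqrt(2)·(c+1)))·(sqrt(E) − sqrt(E−2)). -/

import Mathlib

/-!
Clearing the denominator `ζ²`, `Ω²(ζ) = 0` becomes the biquadratic equation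
`16(c+1)²ζ⁴ + 8(c²-1)(E-1)ζ² + (c-1)² = 0`. With `k = √(c²-1)/(2√2(c+1))`, the reals
`p = k(√E + √(E-2))` and `q = k(√E - √(E-2))` satisfy `p² + q² = (c²-1)(E-1)/(2(c+1)²)` and
`p²q² = (c-1)²/(16(c+1)²)`, so by Vieta the biquadratic factors as `16(c+1)²(ζ² + p²)(ζ² + q²)`,
whose roots are `±ip` and `±iq`.
-/

open Complex

noncomputable def omegaSq (c E ζ : ℂ) : ℂ :=
  (1 / 64 : ℂ) * (-8 * (c ^ 2 - 1) * (E - 1) - (c - 1) ^ 2 / ζ ^ 2 - 16 * (c + 1) ^ 2 * ζ ^ 2)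

theorem sq_add_sq_eq_zero_iff_eq_I_mul_or_eq_neg_I_mul (z p : ℂ) :
    z ^ 2 + p ^ 2 = 0 ↔ z = I * p ∨ z = -(I * p) := by
  rw [add_eq_zero_iff_eq_neg, ← sq_eq_sq_iff_eq_or_eq_neg, mul_pow, I_sq, neg_one_mul]

theorem mul_sq_add_sq_eq_zero_iff (z p q : ℂ) :
    (z ^ 2 + p ^ 2) * (z ^ 2 + q ^ 2) = 0 ↔
      z = I * p ∨ z = -(I * p) ∨ z = I * q ∨ z = -(I * q) := by
  rw [mul_eq_zero, sq_add_sq_eq_zero_iff_eq_I_mul_or_eq_neg_I_mul,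
    sq_add_sq_eq_zero_iff_eq_I_mul_or_eq_neg_I_mul, or_assoc]

section Factorization

variable {c E p q ζ : ℂ}

theorem omegaSq_mul_sq (hsum : 2 * (c + 1) ^ 2 * (p ^ 2 + q ^ 2) = (c ^ 2 - 1) * (E - 1))
    (hprod : 16 * (c + 1) ^ 2 * (p ^ 2 * q ^ 2) = (c - 1) ^ 2) (hζ : ζ ≠ 0) :
    omegaSq c E ζ * ζ ^ 2 = -((c + 1) ^ 2 / 4) * ((ζ ^ 2 + p ^ 2) * (ζ ^ 2 + q ^ 2)) := by
  have hcancel : (c - 1) ^ 2 / ζ ^ 2 * ζ ^ 2 = (c - 1) ^ 2 := div_mul_cancel₀ _ (pow_ne_zero 2 hζ)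
  rw [omegaSq]
  linear_combination (-1 / 64) * hcancel + ζ ^ 2 / 8 * hsum + 1 / 64 * hprod

theorem omegaSq_eq_zero_iff (hc : c + 1 ≠ 0)
    (hsum : 2 * (c + 1) ^ 2 * (p ^ 2 + q ^ 2) = (c ^ 2 - 1) * (E - 1))
    (hprod : 16 * (c + 1) ^ 2 * (p ^ 2 * q ^ 2) = (c - 1) ^ 2) (hζ : ζ ≠ 0) :
    omegaSq c E ζ = 0 ↔ (ζ ^ 2 + p ^ 2) * (ζ ^ 2 + q ^ 2) = 0 := by
  have hfactor : -((c + 1) ^ 2 / 4) ≠ 0 := by simpa using hc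
  rw [← mul_eq_zero_iff_right (pow_ne_zero 2 hζ), omegaSq_mul_sq hsum hprod hζ,
    mul_eq_zero_iff_left hfactor]

theorem setOf_omegaSq_eq_zero (hc₁ : c + 1 ≠ 0) (hc₂ : c - 1 ≠ 0)
    (hsum : 2 * (c + 1) ^ 2 * (p ^ 2 + q ^ 2) = (c ^ 2 - 1) * (E - 1))
    (hprod : 16 * (c + 1) ^ 2 * (p ^ 2 * q ^ 2) = (c - 1) ^ 2) :
    {ζ | ζ ≠ 0 ∧ omegaSq c E ζ = 0} = {I * p, -(I * p), I * q, -(I * q)} := by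
  have hpq : p ^ 2 * q ^ 2 ≠ 0 := fun h ↦ hc₂ <| pow_eq_zero_iff two_ne_zero |>.1 <| by
    rw [← hprod, h, mul_zero]
  obtain ⟨hp, hq⟩ : p ≠ 0 ∧ q ≠ 0 := by simpa using hpq
  ext ζ
  simp only [Set.mem_ofPred_eq, Set.mem_insert_iff, Set.mem_singleton_iff]
  constructor
  · rintro ⟨hζ, h⟩
    exact (mul_sq_add_sq_eq_zero_iff ζ p q).1 ((omegaSq_eq_zero_iff hc₁ hsum hprod hζ).1 h)
  · intro h
    have hζ : ζ ≠ 0 := by rcases h with rfl | rfl | rfl | rfl <;> simp [hp, hq]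
    exact ⟨hζ, (omegaSq_eq_zero_iff hc₁ hsum hprod hζ).2 ((mul_sq_add_sq_eq_zero_iff ζ p q).2 h)⟩

end Factorization

theorem div_sq_mul_eq_sub_one {c : ℝ} (hc : 1 ≤ c) :
    (√(c ^ 2 - 1) / (2 * √2 * (c + 1))) ^ 2 * (8 * (c + 1)) = c - 1 := by
  have hc₁ : c + 1 ≠ 0 := by linarith
  rw [div_pow, mul_pow, mul_pow, Real.sq_sqrt (by nlinarith), Real.sq_sqrt zero_le_two]
  field_simp
  ring

theorem sqrt_add_sqrt_sub_two_mul {E : ℝ} (hE : 2 ≤ E) :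
    (√E + √(E - 2)) * (√E - √(E - 2)) = 2 := by
  rw [← sq_sub_sq, Real.sq_sqrt (by linarith), Real.sq_sqrt (by linarith)]
  ring

theorem sqrt_add_sqrt_sub_two_sq_add_sq {E : ℝ} (hE : 2 ≤ E) :
    (√E + √(E - 2)) ^ 2 + (√E - √(E - 2)) ^ 2 = 4 * (E - 1) := by
  have hE₀ := Real.sq_sqrt (show 0 ≤ E by linarith)
  have hE₂ := Real.sq_sqrt (show 0 ≤ E - 2 by linarith)
  linear_combination 2 * hE₀ + 2 * hE₂

/-- Superluminal rotational case `c > 1`, `E > 2`: the nonzero complex zeros of `Ω²` are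
exactly the four purely imaginary numbers
`±i·(sqrt(c²−1)/(2√2(c+1)))(sqrt(E) ± sqrt(E−2))`. -/
theorem omega_sq_zeros_superluminal_rotational (c E : ℝ) (hc : c > 1) (hE : E > 2) :
    {ζ : ℂ | ζ ≠ 0 ∧
        (1 / 64 : ℂ) * (-8 * ((c : ℂ) ^ 2 - 1) * ((E : ℂ) - 1) - ((c : ℂ) - 1) ^ 2 / ζ ^ 2 -
          16 * ((c : ℂ) + 1) ^ 2 * ζ ^ 2) = 0} =
      {Complex.I * ((Real.sqrt (c ^ 2 - 1) / (2 * Real.sqrt 2 * (c + 1))) *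
          (Real.sqrt E + Real.sqrt (E - 2)) : ℝ),
       -(Complex.I * ((Real.sqrt (c ^ 2 - 1) / (2 * Real.sqrt 2 * (c + 1))) *
          (Real.sqrt E + Real.sqrt (E - 2)) : ℝ)),
       Complex.I * ((Real.sqrt (c ^ 2 - 1) / (2 * Real.sqrt 2 * (c + 1))) *
          (Real.sqrt E - Real.sqrt (E - 2)) : ℝ),
       -(Complex.I * ((Real.sqrt (c ^ 2 - 1) / (2 * Real.sqrt 2 * (c + 1))) *
          (Real.sqrt E - Real.sqrt (E - 2)) : ℝ))} := by
  set k := √(c ^ 2 - 1) / (2 * √2 * (c + 1))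
  set a := √E + √(E - 2)
  set b := √E - √(E - 2)
  have hk : k ^ 2 * (8 * (c + 1)) = c - 1 := div_sq_mul_eq_sub_one hc.le
  have hab : a * b = 2 := sqrt_add_sqrt_sub_two_mul hE.le
  have hab₂ : a ^ 2 + b ^ 2 = 4 * (E - 1) := sqrt_add_sqrt_sub_two_sq_add_sq hE.le
  have hsum : 2 * (c + 1) ^ 2 * ((k * a) ^ 2 + (k * b) ^ 2) = (c ^ 2 - 1) * (E - 1) := by
    linear_combination (c + 1) * (E - 1) * hk + (c + 1) ^ 2 * k ^ 2 * 2 * hab₂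
  have hprod : 16 * (c + 1) ^ 2 * ((k * a) ^ 2 * (k * b) ^ 2) = (c - 1) ^ 2 := by
    linear_combination (8 * (c + 1) * k ^ 2 + (c - 1)) * hk
      + 16 * (c + 1) ^ 2 * k ^ 4 * (a * b + 2) * hab
  refine setOf_omegaSq_eq_zero (E := E) ?_ ?_ (by exact_mod_cast hsum) (by exact_mod_cast hprod)
  · exact_mod_cast (show c + 1 ≠ 0 by linarith)
  · exact_mod_cast (show c - 1 ≠ 0 by linarith)
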